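/- arXiv:1409.4455 — 3 statements merged into one kernel-verified Lean document; each statement's English description precedes it below -/
import Mathlib

section
/- Fix k ∈ ℕ, μ₀ ∈ ℝ and μ ∈ ℝⁿ. For each m ∈ ℕ, let σ_k(μ₁,…,μₙ, μ₀/m,…,μ₀/m) denote the k-th elementary symmetric polynomial in n+m variables evaluated at the n coordinates of μ together with m copies of μ₀/m. Then σ_k(μ₁,…,μₙ, μ₀/m,…,μ₀/m) tends to σ_k^∞(μ₀;μ) as m → ∞. -/
/-- The `m`-th elementary symmetric polynomial in the `n` variables `μ 0, …, μ (n-1)`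
(with `σ₀ = 1` and `σ_m = 0` for `m > n`). -/
noncomputable def esymm {n : ℕ} (μ : Fin n → ℝ) (m : ℕ) : ℝ :=
  ∑ s ∈ Finset.powersetCard m (Finset.univ : Finset (Fin n)), ∏ i ∈ s, μ i

/-- The `k`-th weighted elementary symmetric polynomial
`σ_k^∞(μ₀;μ) = ∑_{j=0}^k (μ₀^j/j!) σ_{k-j}(μ)`. -/
noncomputable def sigmaInf {n : ℕ} (μ₀ : ℝ) (μ : Fin n → ℝ) (k : ℕ) : ℝ :=
  ∑ j ∈ Finset.range (k + 1), μ₀ ^ j / (Nat.factorial j : ℝ) * esymm μ (k - j)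

/-!
Split the `n + m` variables into the `μ i` and the `m` copies of `μ₀ / m`: the elementary
symmetric polynomials of a disjoint union are the convolution
`σ_k(μ, ν) = ∑_j σ_{k-j}(μ) σ_j(ν)`, and `σ_j` of `m` equal entries `c` is `C(m, j) c^j`.
Since `C(m, j) ~ m^j / j!`, each term `C(m, j) (μ₀ / m)^j` tends to `μ₀^j / j!`.
-/

open Filter Finset Topology Asymptotics

namespace Multiset

variable {R : Type*} [CommSemiring R]

@[simp]
theorem esymm_zero_right (s : Multiset R) : s.esymm 0 = 1 := by
  simp [esymm, powersetCard_zero_left]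

@[simp]
theorem zero_esymm_succ (k : ℕ) : (0 : Multiset R).esymm (k + 1) = 0 := by
  simp [esymm, powersetCard_zero_right]

theorem esymm_cons_succ (a : R) (s : Multiset R) (k : ℕ) :
    (a ::ₘ s).esymm (k + 1) = s.esymm (k + 1) + a * s.esymm k := by
  simp only [esymm, powersetCard_cons, map_add, sum_add, map_map, Function.comp_def, prod_cons,
    sum_map_mul_left]

theorem esymm_add (s t : Multiset R) (k : ℕ) :
    (s + t).esymm k = ∑ j ∈ Finset.range (k + 1), s.esymm (k - j) * t.esymm j := by
  induction t using Multiset.induction generalizing k with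
  | empty =>
    rw [Finset.sum_range_succ']
    cases k <;> simp
  | cons a t ih =>
    rw [add_cons]
    cases k with
    | zero => simp
    | succ k =>
      rw [esymm_cons_succ, ih, ih, Finset.sum_range_succ' _ (k + 1),
        Finset.sum_range_succ' _ (k + 1)]
      simp only [esymm_cons_succ, esymm_zero_right, Nat.add_sub_add_right, Nat.sub_zero, mul_one,
        mul_add, Finset.sum_add_distrib, Finset.mul_sum, mul_left_comm a]
      exact add_right_comm _ _ _

end Multiset

theorem esymm_eq_multiset_esymm {n : ℕ} (μ : Fin n → ℝ) (k : ℕ) :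
    esymm μ k = (List.ofFn μ : Multiset ℝ).esymm k := by
  rw [← Fin.univ_val_map, Finset.esymm_map_val, esymm]

theorem esymm_append {n m : ℕ} (μ : Fin n → ℝ) (ν : Fin m → ℝ) (k : ℕ) :
    esymm (Fin.append μ ν) k = ∑ j ∈ range (k + 1), esymm μ (k - j) * esymm ν j := by
  simp only [esymm_eq_multiset_esymm, List.ofFn_fin_append, ← Multiset.coe_add,
    Multiset.esymm_add]

theorem esymm_const (m j : ℕ) (c : ℝ) :
    esymm (fun _ : Fin m => c) j = m.choose j * c ^ j := by
  rw [esymm, sum_congr rfl fun s hs => by rw [prod_const, (mem_powersetCard.1 hs).2],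
    sum_const, card_powersetCard, card_univ, Fintype.card_fin, nsmul_eq_mul]

theorem tendsto_choose_mul_div_pow (j : ℕ) (x : ℝ) :
    Tendsto (fun m : ℕ => (m.choose j : ℝ) * (x / m) ^ j) atTop (𝓝 (x ^ j / j.factorial)) := by
  have hequiv :=
    (isEquivalent_choose j).mul (IsEquivalent.refl (u := fun m : ℕ => (x / m) ^ j))
  refine hequiv.symm.tendsto_nhds (tendsto_const_nhds.congr' ?_)
  filter_upwards [eventually_ne_atTop 0] with m hm
  simp only [Pi.mul_apply]
  field_simp
  rw [← mul_pow, mul_div_cancel₀ x (Nat.cast_ne_zero.2 hm)]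

/-- The `k`-th elementary symmetric polynomial of the `n` coordinates of `μ` together with
`m` copies of `μ₀ / m` tends to `σ_k^∞(μ₀;μ)` as `m → ∞`. -/
theorem weighted_esymm_limit {n : ℕ} (k : ℕ) (μ₀ : ℝ) (μ : Fin n → ℝ) :
    Filter.Tendsto
      (fun m : ℕ => esymm (Fin.append μ (fun _ : Fin m => μ₀ / (m : ℝ))) k)
      Filter.atTop (nhds (sigmaInf μ₀ μ k)) := by
  simp only [esymm_append, esymm_const, sigmaInf]
  refine tendsto_finsetSum _ fun j _ => ?_
  simpa only [mul_comm] using (tendsto_choose_mul_div_pow j μ₀).const_mul (esymm μ (k - j))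
end

section
/- For every integer k ≥ 1, every μ₀ ∈ ℝ and every μ ∈ ℝⁿ, equality holds in the weighted Newton inequality σ_{k−1}^∞(μ₀;μ)·σ_{k+1}^∞(μ₀;μ) ≤ (k/(k+1))·(σ_k^∞(μ₀;μ))² if and only if either μ = 0, or μ₀ = 0 and at most k−1 of the coordinates μ₁,…,μₙ are nonzero. -/
open Polynomial
open scoped Nat

lemma Complex.im_eq_zero_of_im_sum_one_div_sub_eq_zero {s : Multiset ℝ} (hs : s ≠ 0) {z : ℂ}
    (h : (s.map fun r : ℝ => 1 / (z - r)).sum.im = 0) : z.im = 0 := by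
  by_contra hz
  have him : (s.map fun r : ℝ => 1 / (z - r)).sum.im
      = -z.im * (s.map fun r : ℝ => (normSq (z - r))⁻¹).sum := by
    rw [← Multiset.sum_map_mul_left, ← coe_imAddGroupHom, map_multiset_sum, Multiset.map_map]
    refine congrArg Multiset.sum (Multiset.map_congr rfl fun r _ => ?_)
    simp [div_eq_mul_inv]
  have hpos : 0 < (s.map fun r : ℝ => (normSq (z - r))⁻¹).sum := by
    simpa using Multiset.sum_lt_sum_of_nonempty (f := fun _ => (0 : ℝ)) hs fun r _ =>
      inv_pos.2 (normSq_pos.2 fun h0 => hz (by simpa [sub_eq_zero] using congrArg im h0))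
  rw [him, neg_mul, neg_eq_zero] at h
  exact hz ((mul_eq_zero.1 h).resolve_right hpos.ne')

namespace Polynomial

section CommRing

variable {R : Type*} [CommRing R]

noncomputable def laguerre (f : R[X]) : R[X] := derivative f ^ 2 - f * derivative (derivative f)

lemma laguerre_mul (f g : R[X]) :
    laguerre (f * g) = g ^ 2 * laguerre f + f ^ 2 * laguerre g := by
  simp only [laguerre, derivative_mul, derivative_add]
  ring

@[simp] lemma laguerre_C (a : R) : laguerre (C a) = 0 := by simp [laguerre]

@[simp] lemma laguerre_X_add_C (a : R) : laguerre (X + C a) = 1 := by simp [laguerre]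

@[simp] lemma laguerre_X_sub_C (a : R) : laguerre (X - C a) = 1 := by simp [laguerre]

lemma laguerre_eq_zero_of_natDegree_eq_zero {f : R[X]} (hf : f.natDegree = 0) :
    laguerre f = 0 := by
  rw [eq_C_of_natDegree_eq_zero hf, laguerre_C]

end CommRing

section Ordered

variable {R : Type*} [CommRing R] [LinearOrder R] [IsStrictOrderedRing R]

lemma Splits.eval_laguerre_nonneg {f : R[X]} (hf : f.Splits) (x : R) :
    0 ≤ (laguerre f).eval x := by
  induction hf using Submonoid.closure_induction with
  | mem f hf =>
    obtain ⟨a, rfl⟩ | ⟨a, rfl⟩ := hf <;> simp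
  | one => simp [laguerre]
  | mul f g _ _ hf hg =>
    simp only [laguerre_mul, eval_add, eval_mul, eval_pow]
    exact add_nonneg (mul_nonneg (sq_nonneg _) hf) (mul_nonneg (sq_nonneg _) hg)

lemma Splits.eval_laguerre_pos {f : R[X]} (hf : f.Splits) (hdeg : f.natDegree ≠ 0) {x : R}
    (hx : f.rootMultiplicity x ≤ 1) : 0 < (laguerre f).eval x := by
  have hf0 : f ≠ 0 := by rintro rfl; simp at hdeg
  obtain ⟨r, g, hfg, hg⟩ : ∃ r g, f = (X - C r) * g ∧ g.eval x ≠ 0 := by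
    by_cases hfx : f.IsRoot x
    · obtain ⟨g, hfg⟩ := dvd_iff_isRoot.2 hfx
      refine ⟨x, g, hfg, fun hgx => ?_⟩
      have hf' : (derivative f).IsRoot x := by
        simp [hfg, derivative_mul, hgx]
      exact absurd ((one_lt_rootMultiplicity_iff_isRoot hf0).2 ⟨hfx, hf'⟩) (not_lt.2 hx)
    · obtain ⟨r, hr⟩ := hf.exists_eval_eq_zero (by rwa [degree_eq_natDegree hf0, Nat.cast_ne_zero])
      obtain ⟨g, hfg⟩ := dvd_iff_isRoot.2 hr
      exact ⟨r, g, hfg, fun hgx => hfx (by simp [hfg, hgx])⟩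
  have hgs : g.Splits := (splits_mul_iff_right (X_sub_C_ne_zero r) (Splits.X_sub_C r)).1 (hfg ▸ hf)
  have hLg := hgs.eval_laguerre_nonneg x
  rw [hfg, laguerre_mul, laguerre_X_sub_C, eval_add, eval_mul, eval_mul]
  simp only [eval_pow, eval_one, mul_one]
  positivity

lemma Splits.eval_laguerre_eq_zero_iff {f : R[X]} (hf : f.Splits) {x : R}
    (hx : f.rootMultiplicity x ≤ 1) : (laguerre f).eval x = 0 ↔ f.natDegree = 0 :=
  ⟨fun h => by_contra fun hdeg => (hf.eval_laguerre_pos hdeg hx).ne' h,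
    fun h => by rw [laguerre_eq_zero_of_natDegree_eq_zero h, eval_zero]⟩

end Ordered

section Twisted

variable {R : Type*} [CommRing R]

noncomputable def twistedDerivative (c : R) : Module.End R R[X] := derivative + c • 1

lemma twistedDerivative_apply (c : R) (f : R[X]) :
    twistedDerivative c f = derivative f + C c * f := by
  simp [twistedDerivative, smul_eq_C_mul]

lemma twistedDerivative_zero_pow_apply (f : R[X]) (j : ℕ) :
    (twistedDerivative 0 ^ j) f = derivative^[j] f := by
  simp [twistedDerivative, Module.End.pow_apply]

lemma sq_twistedDerivative_sub_mul (c : R) (f : R[X]) :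
    twistedDerivative c f ^ 2 - f * twistedDerivative c (twistedDerivative c f) = laguerre f := by
  simp only [twistedDerivative_apply, laguerre, derivative_add, derivative_C_mul]
  ring

lemma natDegree_twistedDerivative_le (c : R) (f : R[X]) :
    (twistedDerivative c f).natDegree ≤ f.natDegree := by
  rw [twistedDerivative_apply]
  exact natDegree_add_le_of_degree_le ((natDegree_derivative_le f).trans (Nat.sub_le _ _))
    (natDegree_C_mul_le c f)

lemma eval_zero_iterate_derivative (f : R[X]) (k : ℕ) :
    (derivative^[k] f).eval 0 = k ! * f.coeff k := by
  rw [← coeff_zero_eq_eval_zero, coeff_iterate_derivative, zero_add, Nat.descFactorial_self,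
    nsmul_eq_mul]

lemma natDegree_twistedDerivative [NoZeroDivisors R] {c : R} (hc : c ≠ 0) (f : R[X]) :
    (twistedDerivative c f).natDegree = f.natDegree := by
  rw [twistedDerivative_apply]
  by_cases hf : f.natDegree = 0
  · rw [derivative_of_natDegree_zero hf, zero_add, natDegree_C_mul hc]
  · rw [natDegree_add_eq_right_of_natDegree_lt, natDegree_C_mul hc]
    exact (natDegree_C_mul hc).symm ▸ natDegree_derivative_lt hf

lemma natDegree_twistedDerivative_pow [NoZeroDivisors R] {c : R} (hc : c ≠ 0) (f : R[X]) (j : ℕ) :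
    ((twistedDerivative c ^ j) f).natDegree = f.natDegree := by
  induction j with
  | zero => rfl
  | succ j ih => rw [pow_succ', Module.End.mul_apply, natDegree_twistedDerivative hc, ih]

end Twisted

section CharZero

variable {K : Type*} [Field K] [CharZero K]

lemma natDegree_iterate_derivative_eq (f : K[X]) (k : ℕ) :
    (derivative^[k] f).natDegree = f.natDegree - k := by
  induction k with
  | zero => rfl
  | succ k ih => rw [Function.iterate_succ_apply', natDegree_derivative, ih, Nat.sub_sub]

lemma eval_zero_twistedDerivative_pow (c : K) (f : K[X]) (j : ℕ) :
    ((twistedDerivative c ^ j) f).eval 0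
      = j ! * ∑ i ∈ Finset.range (j + 1), c ^ i / i ! * f.coeff (j - i) := by
  have hcomm : Commute (c • 1 : Module.End K K[X]) derivative := (Commute.one_left _).smul_left c
  rw [twistedDerivative, add_comm, hcomm.add_pow, LinearMap.sum_apply, eval_finsetSum,
    Finset.mul_sum]
  refine Finset.sum_congr rfl fun i hi => ?_
  have hij : i ≤ j := Nat.lt_succ_iff.1 (Finset.mem_range.1 hi)
  have hfac : (j.choose i * i ! * (j - i)! : K) = j ! := by
    exact_mod_cast Nat.choose_mul_factorial_mul_factorial hij
  simp only [_root_.smul_pow, one_pow, smul_mul_assoc, one_mul, LinearMap.smul_apply,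
    Module.End.mul_apply, Module.End.natCast_apply, Module.End.pow_apply, eval_smul,
    eval_zero_iterate_derivative, coeff_natCast_mul, nsmul_eq_mul, smul_eq_mul, ← hfac]
  field_simp [i.factorial_ne_zero]

end CharZero

lemma splits_twistedDerivative {f : ℝ[X]} (hf : f.Splits) (c : ℝ) :
    (twistedDerivative c f).Splits := by
  rcases eq_or_ne f.natDegree 0 with hdeg | hdeg
  · rw [twistedDerivative_apply, derivative_of_natDegree_zero hdeg, zero_add]
    exact hf.C_mul c
  have hf0 : f ≠ 0 := by rintro rfl; simp at hdeg
  refine Splits.of_splits_map (algebraMap ℝ ℂ) (IsAlgClosed.splits _) fun z hz => ?_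
  set F := f.map (algebraMap ℝ ℂ)
  have hF : F.Splits := hf.map _
  by_cases hFz : F.IsRoot z
  · exact hf.mem_range_of_isRoot hf0 hFz
  have hsum : (f.roots.map fun r : ℝ => 1 / (z - r)).sum + c = 0 := by
    have hz' : (derivative F).eval z + c * F.eval z = 0 := by
      simpa [F, twistedDerivative_apply, derivative_map] using (mem_roots'.1 hz).2
    rw [hF.eval_derivative_eq_eval_mul_sum hFz, hf.roots_map, Multiset.map_map,
      mul_comm _ (eval z F), ← mul_add] at hz'
    exact (mul_eq_zero.1 hz').resolve_left hFz
  have him := congrArg Complex.im hsum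
  rw [Complex.add_im, Complex.ofReal_im, add_zero, Complex.zero_im] at him
  refine ⟨z.re, Complex.ext rfl ?_⟩
  simp [Complex.im_eq_zero_of_im_sum_one_div_sub_eq_zero (hf.roots_ne_zero hdeg) him]

lemma Splits.rootMultiplicity_twistedDerivative_le_one {f : ℝ[X]} (hf : f.Splits) (c : ℝ) {x : ℝ}
    (hx : f.rootMultiplicity x ≤ 1) : (twistedDerivative c f).rootMultiplicity x ≤ 1 := by
  by_contra! hg
  have hg0 : twistedDerivative c f ≠ 0 := by rintro h0; simp [h0] at hg
  obtain ⟨hgx, hg'x⟩ := (one_lt_rootMultiplicity_iff_isRoot hg0).1 hg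
  have hlag : (laguerre f).eval x = 0 := by
    rw [← sq_twistedDerivative_sub_mul c f, twistedDerivative_apply c (twistedDerivative c f)]
    simp only [eval_sub, eval_pow, eval_mul, eval_add, hgx.eq_zero, hg'x.eq_zero]
    ring
  have hgdeg : (twistedDerivative c f).natDegree = 0 :=
    Nat.eq_zero_of_le_zero
      ((natDegree_twistedDerivative_le c f).trans ((hf.eval_laguerre_eq_zero_iff hx).1 hlag).le)
  rw [eq_C_of_natDegree_eq_zero hgdeg, IsRoot, eval_C] at hgx
  exact hg0 (by rw [eq_C_of_natDegree_eq_zero hgdeg, hgx, C_0])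

lemma splits_twistedDerivative_pow {f : ℝ[X]} (hf : f.Splits) (c : ℝ) (j : ℕ) :
    ((twistedDerivative c ^ j) f).Splits := by
  induction j with
  | zero => exact hf
  | succ j ih => rw [pow_succ', Module.End.mul_apply]; exact splits_twistedDerivative ih c

lemma Splits.rootMultiplicity_twistedDerivative_pow_le_one {f : ℝ[X]} (hf : f.Splits) (c : ℝ)
    {x : ℝ} (hx : f.rootMultiplicity x ≤ 1) (j : ℕ) :
    ((twistedDerivative c ^ j) f).rootMultiplicity x ≤ 1 := by
  induction j with
  | zero => exact hx
  | succ j ih =>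
    rw [pow_succ', Module.End.mul_apply]
    exact (splits_twistedDerivative_pow hf c j).rootMultiplicity_twistedDerivative_le_one c ih

end Polynomial

section ElementarySymmetric

variable {n : ℕ}

noncomputable def esymmPoly (μ : Fin n → ℝ) : ℝ[X] := ∏ i, (1 + C (μ i) * X)

lemma coeff_esymmPoly (μ : Fin n → ℝ) (m : ℕ) : (esymmPoly μ).coeff m = esymm μ m := by
  simp only [esymmPoly, Finset.prod_one_add, finsetSum_coeff, Finset.prod_mul_distrib,
    Finset.prod_const, ← map_prod, coeff_C_mul_X_pow]
  rw [esymm, Finset.powersetCard_eq_filter, Finset.sum_filter]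
  exact Finset.sum_congr rfl fun t _ => by simp only [eq_comm]

lemma natDegree_one_add_C_mul_X (a : ℝ) : (1 + C a * X).natDegree = if a = 0 then 0 else 1 := by
  split_ifs with ha
  · simp [ha]
  · rw [add_comm, ← C_1, natDegree_linear ha]

lemma natDegree_esymmPoly (μ : Fin n → ℝ) :
    (esymmPoly μ).natDegree = (Finset.univ.filter fun i => μ i ≠ 0).card := by
  rw [esymmPoly, natDegree_prod _ _ fun i _ h => by simpa using congrArg (eval 0) h,
    Finset.card_filter]
  simp only [natDegree_one_add_C_mul_X, ite_not]

lemma splits_esymmPoly (μ : Fin n → ℝ) : (esymmPoly μ).Splits :=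
  Splits.prod fun i _ => Splits.of_natDegree_le_one (by
    rw [natDegree_one_add_C_mul_X]; split_ifs <;> simp)

lemma rootMultiplicity_zero_esymmPoly (μ : Fin n → ℝ) : (esymmPoly μ).rootMultiplicity 0 = 0 :=
  rootMultiplicity_eq_zero (by simp [esymmPoly, eval_prod])

lemma eval_zero_twistedDerivative_pow_esymmPoly (μ₀ : ℝ) (μ : Fin n → ℝ) (j : ℕ) :
    ((twistedDerivative μ₀ ^ j) (esymmPoly μ)).eval 0 = j ! * sigmaInf μ₀ μ j := by
  simp only [eval_zero_twistedDerivative_pow, coeff_esymmPoly, sigmaInf]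

end ElementarySymmetric

lemma newton_eq_iff_eval_laguerre_eq_zero {n k : ℕ} (hk : 1 ≤ k) (μ₀ : ℝ) (μ : Fin n → ℝ) :
    sigmaInf μ₀ μ (k - 1) * sigmaInf μ₀ μ (k + 1) = k / (k + 1) * sigmaInf μ₀ μ k ^ 2
      ↔ (laguerre ((twistedDerivative μ₀ ^ (k - 1)) (esymmPoly μ))).eval 0 = 0 := by
  obtain ⟨K, rfl⟩ : ∃ K, k = K + 1 := ⟨k - 1, by omega⟩
  rw [Nat.add_sub_cancel, ← sq_twistedDerivative_sub_mul, ← Module.End.mul_apply, ← pow_succ',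
    ← Module.End.mul_apply, ← pow_succ']
  simp only [eval_sub, eval_pow, eval_mul, eval_zero_twistedDerivative_pow_esymmPoly,
    Nat.factorial_succ]
  push_cast
  have hc : (K ! : ℝ) ^ 2 * (K + 1) * (K + 2) ≠ 0 := by positivity
  rw [← sub_eq_zero, ← mul_eq_zero_iff_left hc, ← neg_eq_zero]
  exact iff_of_eq (congrArg (· = (0 : ℝ)) (by field_simp; ring))

/-- Equality in the weighted Newton inequality holds if and only if `μ = 0`, or `μ₀ = 0`
and at most `k - 1` of the coordinates of `μ` are nonzero. -/
theorem weighted_newton_inequality_equality_iff {n : ℕ} (k : ℕ) (hk : 1 ≤ k) (μ₀ : ℝ)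
    (μ : Fin n → ℝ) :
    sigmaInf μ₀ μ (k - 1) * sigmaInf μ₀ μ (k + 1)
        = (k : ℝ) / ((k : ℝ) + 1) * (sigmaInf μ₀ μ k) ^ 2
      ↔ μ = 0 ∨ (μ₀ = 0 ∧ (Finset.univ.filter fun i => μ i ≠ 0).card ≤ k - 1) := by
  have hP := splits_esymmPoly μ
  have hP0 : (esymmPoly μ).rootMultiplicity 0 ≤ 1 := by
    rw [rootMultiplicity_zero_esymmPoly]; exact zero_le_one
  rw [newton_eq_iff_eval_laguerre_eq_zero hk,
    (splits_twistedDerivative_pow hP μ₀ (k - 1)).eval_laguerre_eq_zero_iff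
      (hP.rootMultiplicity_twistedDerivative_pow_le_one μ₀ hP0 (k - 1))]
  rcases eq_or_ne μ₀ 0 with rfl | hμ₀
  · rw [twistedDerivative_zero_pow_apply, natDegree_iterate_derivative_eq, natDegree_esymmPoly,
      Nat.sub_eq_zero_iff_le]
    refine ⟨fun h => Or.inr ⟨rfl, h⟩, ?_⟩
    rintro (rfl | ⟨-, h⟩)
    · simp
    · exact h
  · rw [natDegree_twistedDerivative_pow hμ₀, natDegree_esymmPoly]
    simp [hμ₀, funext_iff]
end

section
/- Let P be a real symmetric n×n matrix and let μ₀ ∈ ℝ. Then for all k ∈ ℕ, trace(T_k^∞(μ₀;P)·P) = (k+1)·σ_{k+1}^∞(μ₀;P) − μ₀·σ_k^∞(μ₀;P). -/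
/-- `σ_k^∞(μ₀;P)` for a real symmetric (Hermitian) matrix `P`, defined via the eigenvalues
of `P` (with multiplicity). -/
noncomputable def sigmaInfMat {n : ℕ} (μ₀ : ℝ) {P : Matrix (Fin n) (Fin n) ℝ}
    (hP : P.IsHermitian) (k : ℕ) : ℝ :=
  sigmaInf μ₀ hP.eigenvalues k

/-- The `k`-th weighted Newton transformation `T_k^∞(μ₀;P) = ∑_{j=0}^k (-1)^j σ_{k-j}^∞(μ₀;P) P^j`. -/
noncomputable def newtonMat {n : ℕ} (μ₀ : ℝ) {P : Matrix (Fin n) (Fin n) ℝ}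
    (hP : P.IsHermitian) (k : ℕ) : Matrix (Fin n) (Fin n) ℝ :=
  ∑ j ∈ Finset.range (k + 1), ((-1 : ℝ) ^ j * sigmaInfMat μ₀ hP (k - j)) • P ^ j


/-!
`σ_k^∞(μ₀;μ)` is the coefficient of `X^k` in `S = e^{μ₀X} ∏ᵢ (1 + μᵢX)`. By Newton's identities the
logarithmic derivative of `∏ᵢ (1 + μᵢX)` is `Q = ∑ⱼ (-1)ʲ pⱼ₊₁ Xʲ`, with `pₘ = ∑ᵢ μᵢᵐ`, so
`S' = (μ₀ + Q) S`. Comparing coefficients of `X^k` gives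
`(k+1) σ_{k+1}^∞ = μ₀ σ_k^∞ + ∑ⱼ (-1)ʲ pⱼ₊₁ σ_{k-j}^∞`, and the last sum is `trace (T_k^∞ P)`
because `trace (P^m) = pₘ` for the eigenvalues of `P`.
-/

open Finset PowerSeries Nat

theorem Matrix.IsHermitian.trace_pow_eq_sum_eigenvalues_pow {𝕜 ι : Type*} [RCLike 𝕜] [Fintype ι]
    [DecidableEq ι] {A : Matrix ι ι 𝕜} (hA : A.IsHermitian) (j : ℕ) :
    (A ^ j).trace = ∑ i, (hA.eigenvalues i : 𝕜) ^ j := by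
  conv_lhs => rw [hA.spectral_theorem, ← map_pow, Unitary.conjStarAlgAut_apply,
    Matrix.trace_mul_cycle, Unitary.coe_star_mul_self, one_mul, Matrix.diagonal_pow,
    Matrix.trace_diagonal]
  simp

theorem eval_mvPolynomial_esymm {n : ℕ} (μ : Fin n → ℝ) (m : ℕ) :
    MvPolynomial.eval μ (MvPolynomial.esymm (Fin n) ℝ m) = esymm μ m := by
  simp [MvPolynomial.esymm, esymm]

theorem sum_antidiagonal_esymm_mul_psum {n : ℕ} (μ : Fin n → ℝ) (m : ℕ) :
    ∑ p ∈ antidiagonal m, esymm μ p.1 * ((-1) ^ p.2 * ∑ i, μ i ^ (p.2 + 1))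
      = (m + 1) * esymm μ (m + 1) := by
  have h := congrArg (MvPolynomial.eval μ) (MvPolynomial.mul_esymm_eq_sum (Fin n) ℝ (m + 1))
  simp only [map_mul, map_natCast, map_pow, map_neg, map_one, eval_mvPolynomial_esymm] at h
  rw [sum_filter, Nat.sum_antidiagonal_succ', if_neg (lt_irrefl _), zero_add] at h
  push_cast at h
  rw [h, map_sum, mul_sum]
  refine sum_congr rfl fun ⟨a, b⟩ hab => ?_
  obtain rfl : a + b = m := mem_antidiagonal.mp hab
  have hsign : (-1 : ℝ) ^ (a + a) = 1 := Even.neg_one_pow ⟨a, rfl⟩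
  rw [if_pos (by omega)]
  simp only [map_mul, map_pow, map_neg, map_one, eval_mvPolynomial_esymm, MvPolynomial.psum,
    map_sum, MvPolynomial.eval_X]
  linear_combination (-(esymm μ a) * (-1) ^ b * ∑ i, μ i ^ (b + 1)) * hsign

theorem derivative_mk_pow_div_factorial {K : Type*} [Field K] [CharZero K] (a : K) :
    d⁄dX K (mk fun i => a ^ i / i !) = C a * mk fun i => a ^ i / i ! := by
  ext i
  rw [coeff_derivative, coeff_C_mul, coeff_mk, coeff_mk, Nat.factorial_succ]
  push_cast
  field_simp
  ring

theorem derivative_mk_esymm {n : ℕ} (μ : Fin n → ℝ) :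
    d⁄dX ℝ (mk (esymm μ)) = mk (esymm μ) * mk fun j => (-1) ^ j * ∑ i, μ i ^ (j + 1) := by
  ext m
  rw [coeff_derivative, coeff_mul, coeff_mk, mul_comm, ← sum_antidiagonal_esymm_mul_psum]
  simp

theorem coeff_mk_mul_mk_esymm {n : ℕ} (μ₀ : ℝ) (μ : Fin n → ℝ) (k : ℕ) :
    coeff k ((mk fun i => μ₀ ^ i / i !) * mk (esymm μ)) = sigmaInf μ₀ μ k := by
  rw [coeff_mul, Nat.sum_antidiagonal_eq_sum_range_succ (fun i j => coeff i _ * coeff j _)]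
  simp [sigmaInf]

theorem sum_sigmaInf_mul_psum {n : ℕ} (μ₀ : ℝ) (μ : Fin n → ℝ) (k : ℕ) :
    ∑ j ∈ range (k + 1), (-1) ^ j * sigmaInf μ₀ μ (k - j) * ∑ i, μ i ^ (j + 1)
      = (k + 1) * sigmaInf μ₀ μ (k + 1) - μ₀ * sigmaInf μ₀ μ k := by
  set S := (mk fun i => μ₀ ^ i / i !) * mk (esymm μ)
  set Q : PowerSeries ℝ := mk fun j => (-1) ^ j * ∑ i, μ i ^ (j + 1)
  have hS : d⁄dX ℝ S = C μ₀ * S + Q * S := by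
    rw [Derivation.leibniz, derivative_mk_pow_div_factorial, derivative_mk_esymm, smul_eq_mul,
      smul_eq_mul]
    ring
  have hk := congrArg (coeff k) hS
  rw [coeff_derivative, map_add, coeff_C_mul, coeff_mul k Q S,
    Nat.sum_antidiagonal_eq_sum_range_succ (fun i j => coeff i Q * coeff j S)] at hk
  simp only [S, coeff_mk_mul_mk_esymm, Q, coeff_mk] at hk
  rw [sum_congr rfl fun j _ => mul_right_comm _ _ _]
  linear_combination -hk

/-- `trace(T_k^∞(μ₀;P) · P) = (k+1) σ_{k+1}^∞(μ₀;P) - μ₀ σ_k^∞(μ₀;P)`. -/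
theorem trace_newtonMat_mul {n : ℕ} (μ₀ : ℝ) (P : Matrix (Fin n) (Fin n) ℝ)
    (hP : P.IsHermitian) (k : ℕ) :
    (newtonMat μ₀ hP k * P).trace
      = ((k : ℝ) + 1) * sigmaInfMat μ₀ hP (k + 1) - μ₀ * sigmaInfMat μ₀ hP k := by
  simp only [newtonMat, sum_mul, smul_mul_assoc, ← pow_succ, Matrix.trace_sum, Matrix.trace_smul,
    smul_eq_mul, hP.trace_pow_eq_sum_eigenvalues_pow]
  exact sum_sigmaInf_mul_psum μ₀ hP.eigenvalues k
end
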